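/- arXiv:0708.2664 — 5 statements merged into one kernel-verified Lean document; each statement's English description precedes it below -/
import Mathlib

section
/- For every integer m ≥ 1 and every real x with sin(mx/2) ≠ 0, Σ_{s=0}^{m−1} 1/sin²((x + 2πs/m)/2) = m²/sin²(mx/2). -/
/-! The cotangents satisfy `∑_{s<m} cot (y + π s / m) = m cot (m y)` (the logarithmic derivative
of `sin (m y) = 2 ^ (m - 1) ∏_{s<m} sin (y + π s / m)`), and differentiating in `y` gives the
identity for `1 / sin²` at `y = x / 2`.

Via `cot w = i⁻¹ (1 + e^{2iw}) / (1 - e^{2iw})` the cotangent identity becomes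
`∑_{s<k} 1 / (1 - ζ ^ s z) = k / (1 - z ^ k)` for a primitive `k`-th root of unity `ζ`: expanding
each term as a geometric series in `ζ ^ s z`, only the constant terms survive the sum over `s`. -/

open Finset Real

namespace IsPrimitiveRoot

variable {K : Type*} [Field K] {k : ℕ} {ζ : K}

theorem pow_mul_pow_eq_pow (hζ : IsPrimitiveRoot ζ k) (s : ℕ) (z : K) :
    (ζ ^ s * z) ^ k = z ^ k := by
  rw [mul_pow, ← pow_mul, mul_comm s, pow_mul, hζ.pow_eq_one, one_pow, one_mul]

theorem geom_sum_pow_eq_zero (hζ : IsPrimitiveRoot ζ k) {j : ℕ} (hj0 : j ≠ 0) (hjk : j < k) :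
    ∑ s ∈ range k, (ζ ^ j) ^ s = 0 := by
  rw [geom_sum_eq (hζ.pow_ne_one_of_pos_of_lt hj0 hjk), ← pow_mul, mul_comm, pow_mul,
    hζ.pow_eq_one, one_pow, sub_self, zero_div]

theorem sum_one_div_one_sub_pow_mul (hζ : IsPrimitiveRoot ζ k) {z : K} (hz : z ^ k ≠ 1) :
    ∑ s ∈ range k, 1 / (1 - ζ ^ s * z) = k / (1 - z ^ k) := by
  have hk : 0 < k := Nat.pos_of_ne_zero (by rintro rfl; exact hz (pow_zero z))
  have hzk : 1 - z ^ k ≠ 0 := sub_ne_zero.2 (Ne.symm hz)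
  have hterm (s : ℕ) : 1 / (1 - ζ ^ s * z) = (∑ j ∈ range k, (ζ ^ s * z) ^ j) / (1 - z ^ k) := by
    have hgeom : (1 - ζ ^ s * z) * ∑ j ∈ range k, (ζ ^ s * z) ^ j = 1 - z ^ k := by
      rw [mul_neg_geom_sum, hζ.pow_mul_pow_eq_pow]
    rw [div_eq_div_iff (left_ne_zero_of_mul (hgeom ▸ hzk)) hzk, one_mul, mul_comm, hgeom]
  rw [sum_congr rfl fun s _ => hterm s, ← sum_div, sum_comm]
  congr 1
  calc ∑ j ∈ range k, ∑ s ∈ range k, (ζ ^ s * z) ^ j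
      = ∑ j ∈ range k, z ^ j * ∑ s ∈ range k, (ζ ^ j) ^ s := by
        simp only [mul_sum, mul_pow, ← pow_mul, mul_comm]
    _ = k := by
        rw [sum_eq_single_of_mem 0 (mem_range.2 hk)
          fun j hj hj0 => by rw [hζ.geom_sum_pow_eq_zero hj0 (mem_range.1 hj), mul_zero]]
        simp

theorem sum_one_add_div_one_sub_pow_mul (hζ : IsPrimitiveRoot ζ k) {z : K} (hz : z ^ k ≠ 1) :
    ∑ s ∈ range k, (1 + ζ ^ s * z) / (1 - ζ ^ s * z) = k * (1 + z ^ k) / (1 - z ^ k) := by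
  have hzk : 1 - z ^ k ≠ 0 := sub_ne_zero.2 (Ne.symm hz)
  have hne (s : ℕ) : 1 - ζ ^ s * z ≠ 0 := by
    rw [sub_ne_zero]
    intro h
    rw [← hζ.pow_mul_pow_eq_pow s, ← h, one_pow] at hz
    exact hz rfl
  have hterm (s : ℕ) : (1 + ζ ^ s * z) / (1 - ζ ^ s * z) = 2 * (1 / (1 - ζ ^ s * z)) - 1 := by
    field_simp [hne s]
    ring
  rw [sum_congr rfl fun s _ => hterm s, sum_sub_distrib, ← mul_sum,
    hζ.sum_one_div_one_sub_pow_mul hz, sum_const, card_range, nsmul_one]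
  field_simp
  ring

end IsPrimitiveRoot

theorem Complex.exp_two_mul_I_mul_ne_one {w : ℂ} (h : Complex.sin w ≠ 0) :
    Complex.exp (2 * Complex.I * w) ≠ 1 := by
  rw [Ne, Complex.exp_eq_one_iff]
  rintro ⟨n, hn⟩
  apply h
  have hw : w = n * π := by
    have hn' := congrArg (· / (2 * Complex.I)) hn
    field_simp at hn'
    linear_combination hn'
  rw [hw, Complex.sin_int_mul_pi]

theorem Complex.sum_cot_add_pi_mul_div {m : ℕ} {y : ℂ} (h : Complex.sin (m * y) ≠ 0) :
    ∑ s ∈ range m, Complex.cot (y + π * s / m) = m * Complex.cot (m * y) := by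
  have hm : m ≠ 0 := by rintro rfl; simp at h
  set ω := Complex.exp (2 * π * Complex.I / m)
  set z := Complex.exp (2 * Complex.I * y)
  have hω : IsPrimitiveRoot ω m := Complex.isPrimitiveRoot_exp m hm
  have hzm : z ^ m = Complex.exp (2 * Complex.I * (m * y)) := by
    rw [← Complex.exp_nat_mul]; ring_nf
  have hexp (s : ℕ) : Complex.exp (2 * Complex.I * (y + π * s / m)) = ω ^ s * z := by
    rw [← Complex.exp_nat_mul, ← Complex.exp_add]
    congr 1
    field_simp
    ring
  have hcot (w : ℂ) : Complex.cot w = Complex.I⁻¹ * ((1 + Complex.exp (2 * Complex.I * w)) /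
      (1 - Complex.exp (2 * Complex.I * w))) := by
    rw [Complex.cot_eq_exp_ratio, div_mul_eq_div_div_swap, div_eq_inv_mul, add_comm]
  simp only [hcot, hexp, ← mul_sum]
  rw [hω.sum_one_add_div_one_sub_pow_mul (hzm ▸ Complex.exp_two_mul_I_mul_ne_one h), hzm]
  ring

theorem Real.sum_cot_add_pi_mul_div {m : ℕ} {y : ℝ} (h : sin (m * y) ≠ 0) :
    ∑ s ∈ range m, cot (y + π * s / m) = m * cot (m * y) := by
  apply Complex.ofReal_injective
  push_cast [Complex.ofReal_cot]
  exact Complex.sum_cot_add_pi_mul_div (by exact_mod_cast h)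

theorem Real.hasDerivAt_cot {x : ℝ} (h : sin x ≠ 0) : HasDerivAt cot (-1 / sin x ^ 2) x := by
  rw [show cot = fun t => cos t / sin t from funext cot_eq_cos_div_sin]
  refine ((hasDerivAt_cos x).div (hasDerivAt_sin x) h).congr_deriv ?_
  rw [← sin_sq_add_cos_sq x]
  ring

theorem Real.sin_add_pi_mul_div_ne_zero {m : ℕ} {y : ℝ} (h : sin (m * y) ≠ 0) (s : ℕ) :
    sin (y + π * s / m) ≠ 0 := by
  have hm : (m : ℝ) ≠ 0 := by rintro hm; simp [hm] at h
  rw [Ne, sin_eq_zero_iff]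
  rintro ⟨n, hn⟩
  apply h
  have hmy : m * y = ((m * n - s : ℤ) : ℝ) * π := by
    rw [show y = n * π - π * s / m by linarith]
    push_cast
    field_simp
  rw [hmy, sin_int_mul_pi]

theorem Real.sum_one_div_sin_sq_add_pi_mul_div {m : ℕ} {y : ℝ} (h : sin (m * y) ≠ 0) :
    ∑ s ∈ range m, 1 / sin (y + π * s / m) ^ 2 = m ^ 2 / sin (m * y) ^ 2 := by
  have hcot : (fun t => ∑ s ∈ range m, cot (t + π * s / m)) =ᶠ[nhds y]
      fun t => m * cot (m * t) := by
    have hopen : IsOpen {t : ℝ | sin (m * t) ≠ 0} := isOpen_ne_fun (by fun_prop) continuous_const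
    filter_upwards [hopen.mem_nhds h] with t ht
    exact sum_cot_add_pi_mul_div ht
  have hleft : HasDerivAt (fun t => ∑ s ∈ range m, cot (t + π * s / m))
      (∑ s ∈ range m, -1 / sin (y + π * s / m) ^ 2) y :=
    HasDerivAt.fun_sum fun s _ =>
      (hasDerivAt_cot (sin_add_pi_mul_div_ne_zero h s)).comp_add_const _ _
  have hright : HasDerivAt (fun t => m * cot (m * t)) (m * (-1 / sin (m * y) ^ 2 * (m * 1))) y :=
    ((hasDerivAt_cot h).comp y ((hasDerivAt_id' y).const_mul _)).const_mul _
  have hderiv := hleft.unique (hright.congr_of_eventuallyEq hcot)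
  simp only [neg_div, sum_neg_distrib] at hderiv
  linear_combination -hderiv

theorem stmt7_general (m : ℕ) (x : ℝ) (hx : Real.sin (m * x / 2) ≠ 0) :
    ∑ s ∈ Finset.range m, 1 / Real.sin ((x + 2 * Real.pi * s / m) / 2) ^ 2 =
      (m : ℝ) ^ 2 / Real.sin (m * x / 2) ^ 2 := by
  rw [mul_div_assoc] at hx ⊢
  convert Real.sum_one_div_sin_sq_add_pi_mul_div hx using 5 with s
  ring

/-- For every `m ≥ 1` and real `x` with `sin(mx/2) ≠ 0`,
`Σ_{s=0}^{m-1} 1/sin²((x + 2πs/m)/2) = m²/sin²(mx/2)`. -/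
theorem stmt7 (m : ℕ) (hm : 1 ≤ m) (x : ℝ) (hx : Real.sin (m * x / 2) ≠ 0) :
    ∑ s ∈ Finset.range m, 1 / Real.sin ((x + 2 * Real.pi * s / m) / 2) ^ 2 =
      (m : ℝ) ^ 2 / Real.sin (m * x / 2) ^ 2 :=
  stmt7_general m x hx
end

section
/- Let N ≥ 2, m ≥ 1, τ = exp(2πi/m), ζ = exp(2πi/(mN)), and qₖ = ζᵏ for k = 1,…,N. Then for every i ∈ {1,…,N}: Σ_{j≠i} Σ_{s=0}^{m−1} τˢ qᵢqⱼ(qᵢ + τˢqⱼ)/(qᵢ − τˢqⱼ)³ = 0. -/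
open Finset Complex

/-! With `g = spinKernel`, the `(j, s)` term equals `g (τ ^ s * q j / q i)`, and
`g x⁻¹ = -g x`. Since `τ = ζ ^ N`, the ratios `τ ^ s * q j / q i` for `1 ≤ j ≤ N`, `0 ≤ s < m` run
once over all `mN`-th roots of unity, while the excluded terms `j = i` give the `m`-th roots of
unity. Inversion permutes every group of roots of unity, so the sum of `g` over each vanishes. -/

section
variable {K : Type*} [Field K]

open Polynomial

noncomputable def spinKernel (x : K) : K := x * (1 + x) / (1 - x) ^ 3

lemma spinKernel_inv (x : K) : spinKernel x⁻¹ = -spinKernel x := by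
  rcases eq_or_ne x 0 with rfl | hx0
  · simp [spinKernel]
  have hnum : x ^ 3 * (x⁻¹ * (1 + x⁻¹)) = x * (1 + x) := by field_simp; ring
  have hden : x ^ 3 * (1 - x⁻¹) ^ 3 = -(1 - x) ^ 3 := by field_simp; ring
  rw [spinKernel, ← mul_div_mul_left _ _ (pow_ne_zero 3 hx0), hnum, hden, div_neg, spinKernel]

lemma mul_add_div_sub_pow_three_eq_spinKernel {a b c : K} (ha : a ≠ 0) :
    c * a * b * (a + c * b) / (a - c * b) ^ 3 = spinKernel (c * b / a) := by
  obtain ⟨x, hx⟩ : ∃ x, c * b = a * x := ⟨c * b / a, by field_simp⟩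
  have hnum : c * a * b * (a + c * b) = a ^ 3 * (x * (1 + x)) := by
    linear_combination a * (a + c * b + a * x) * hx
  have hden : (a - c * b) ^ 3 = a ^ 3 * (1 - x) ^ 3 := by
    linear_combination -((a - c * b) ^ 2 + (a - c * b) * (a - a * x) + (a - a * x) ^ 2) * hx
  rw [hnum, hden, mul_div_mul_left _ _ (pow_ne_zero 3 ha), hx, mul_div_cancel_left₀ x ha,
    spinKernel]

lemma sum_nthRootsFinset_eq_zero_of_apply_inv [CharZero K] {f : K → K}
    (hf : ∀ x, f x⁻¹ = -f x) (M : ℕ) : ∑ x ∈ nthRootsFinset M (1 : K), f x = 0 := by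
  rcases M.eq_zero_or_pos with rfl | hM
  · simp
  have hinv : ∀ x ∈ nthRootsFinset M (1 : K), x⁻¹ ∈ nthRootsFinset M (1 : K) := by
    intro x hx
    rw [mem_nthRootsFinset hM] at hx ⊢
    rw [inv_pow, hx, inv_one]
  have h : ∑ x ∈ nthRootsFinset M (1 : K), f x⁻¹ = ∑ x ∈ nthRootsFinset M (1 : K), f x :=
    sum_nbij' (·⁻¹) (·⁻¹) hinv hinv (fun x _ => inv_inv x) (fun x _ => inv_inv x) (fun x _ => rfl)
  simp only [hf, sum_neg_distrib] at h
  exact neg_eq_self.mp h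

lemma IsPrimitiveRoot.sum_range_pow_mul_eq {β : Type*} [AddCommMonoid β] {ζ c : K} {M : ℕ}
    (hζ : IsPrimitiveRoot ζ M) (hc : c ^ M = 1) (f : K → β) :
    ∑ k ∈ range M, f (ζ ^ k * c) = ∑ x ∈ nthRootsFinset M (1 : K), f x := by
  classical
  rw [nthRootsFinset_def, sum_eq_multiset_sum, sum_eq_multiset_sum, Multiset.toFinset_val,
    hζ.nthRoots_one_nodup.dedup, hζ.nthRoots_eq hc, Multiset.map_map]
  rfl

lemma IsPrimitiveRoot.sum_spinKernel_pow_mul_eq_zero [CharZero K] {ζ c : K} {M : ℕ}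
    (hζ : IsPrimitiveRoot ζ M) (hc : c ^ M = 1) : ∑ k ∈ range M, spinKernel (ζ ^ k * c) = 0 := by
  rw [hζ.sum_range_pow_mul_eq hc, sum_nthRootsFinset_eq_zero_of_apply_inv spinKernel_inv]

end

lemma Complex.exp_two_pi_I_div_mul_pow {m N : ℕ} (hN : N ≠ 0) :
    exp (2 * Real.pi * I / (m * N)) ^ N = exp (2 * Real.pi * I / m) := by
  have : (N : ℂ) ≠ 0 := Nat.cast_ne_zero.mpr hN
  rw [← exp_nat_mul]
  congr 1
  field_simp

lemma Finset.sum_range_mul_eq_sum_sum {β : Type*} [AddCommMonoid β] (f : ℕ → β) (m n : ℕ) :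
    ∑ k ∈ range (m * n), f k = ∑ s ∈ range m, ∑ j ∈ range n, f (s * n + j) := by
  induction m with
  | zero => simp
  | succ m ih => rw [Nat.succ_mul, sum_range_add, ih, sum_range_succ]

/-- Equilibrium condition for the frozen `G(m,1,N)` spin chain: with `τ = exp(2πi/m)`,
`ζ = exp(2πi/(mN))` and equally spaced positions `q_k = ζ^k`, for every `i ∈ {1,…,N}` one has
`Σ_{j≠i} Σ_{s=0}^{m-1} τ^s q_i q_j (q_i + τ^s q_j)/(q_i − τ^s q_j)³ = 0`. -/
theorem stmt10 (N m : ℕ) (hN : 2 ≤ N) (hm : 1 ≤ m) :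
    let τ : ℂ := Complex.exp (2 * Real.pi * Complex.I / m)
    let ζ : ℂ := Complex.exp (2 * Real.pi * Complex.I / (m * N))
    let q : ℕ → ℂ := fun k => ζ ^ k
    ∀ i ∈ Finset.Icc 1 N,
      ∑ j ∈ (Finset.Icc 1 N).erase i, ∑ s ∈ Finset.range m,
        τ ^ s * q i * q j * (q i + τ ^ s * q j) / (q i - τ ^ s * q j) ^ 3 = 0 := by
  intro τ ζ q i hi
  have hζ : IsPrimitiveRoot ζ (m * N) := by
    simpa using Complex.isPrimitiveRoot_exp (m * N) (by positivity)
  have hτ : IsPrimitiveRoot τ m := Complex.isPrimitiveRoot_exp m (by positivity)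
  have hτζ : τ = ζ ^ N := (exp_two_pi_I_div_mul_pow (by omega)).symm
  have hζ0 : ζ ≠ 0 := hζ.ne_zero (by positivity)
  simp only [q, mul_add_div_sub_pow_three_eq_spinKernel (pow_ne_zero i hζ0)]
  rw [sum_erase_eq_sub hi, ← Ico_add_one_right_eq_Icc, sum_Ico_eq_sum_range, add_tsub_cancel_right]
  have hfull : ∑ j ∈ range N, ∑ s ∈ range m, spinKernel (τ ^ s * ζ ^ (1 + j) / ζ ^ i) = 0 := by
    have hc : (ζ / ζ ^ i) ^ (m * N) = 1 := by
      rw [div_pow, hζ.pow_eq_one, ← pow_mul, mul_comm, pow_mul, hζ.pow_eq_one, one_pow, div_one]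
    calc _ = ∑ k ∈ range (m * N), spinKernel (ζ ^ k * (ζ / ζ ^ i)) := by
          rw [sum_range_mul_eq_sum_sum, sum_comm]
          refine sum_congr rfl fun s _ => sum_congr rfl fun j _ => ?_
          rw [hτζ]
          congr 1
          ring
      _ = 0 := hζ.sum_spinKernel_pow_mul_eq_zero hc
  have hdiag : ∑ s ∈ range m, spinKernel (τ ^ s * ζ ^ i / ζ ^ i) = 0 := by
    simp_rw [mul_div_assoc, div_self (pow_ne_zero i hζ0)]
    exact hτ.sum_spinKernel_pow_mul_eq_zero (one_pow m)
  rw [hfull, hdiag, sub_zero]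
end

section
/- In the group G(m,1,N) generated by a, e₁,…,e_{N−1} with relations eᵢ² = 1, braid relations for the eᵢ, aᵐ = 1, a e₁ a e₁ = e₁ a e₁ a, and a eⱼ = eⱼ a for j > 1, one has for every integer s ≥ 0: a⁻ˢ e₁ aˢ = e₁ (e₁ a⁻¹ e₁ a)ˢ. In particular each element a⁻ˢe₁aˢ lies in the subgroup generated by {aᵖ, a⁻¹e₁a, e₁, e₂,…,e_{N−1}} for any p dividing m. -/
/-- In `G(m,1,N)` (abstractly: in any group with elements `a, e₁` satisfying `aᵐ = 1`,
`e₁² = 1` and `a e₁ a e₁ = e₁ a e₁ a`), for every `s ≥ 0` one has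
`a⁻ˢ e₁ aˢ = e₁ (e₁ a⁻¹ e₁ a)ˢ`; in particular `a⁻ˢ e₁ aˢ` lies in the subgroup generated by
`{aᵖ, a⁻¹e₁a, e₁}` for any `p`. -/
theorem stmt13 (G : Type*) [Group G] (m : ℕ) (hm : 1 ≤ m) (a e₁ : G)
    (ham : a ^ m = 1) (he : e₁ ^ 2 = 1)
    (hbr : a * e₁ * a * e₁ = e₁ * a * e₁ * a) :
    ∀ s : ℕ,
      a⁻¹ ^ s * e₁ * a ^ s = e₁ * (e₁ * a⁻¹ * e₁ * a) ^ s ∧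
      ∀ p : ℕ, a⁻¹ ^ s * e₁ * a ^ s ∈
        Subgroup.closure ({a ^ p, a⁻¹ * e₁ * a, e₁} : Set G) := by
  have hinv : e₁⁻¹ = e₁ := by
    rw [inv_eq_iff_mul_eq_one, ← sq]; exact he
  have h2 : e₁ * a⁻¹ * e₁ * a⁻¹ = a⁻¹ * e₁ * a⁻¹ * e₁ := by
    have := congrArg Inv.inv hbr
    simpa [mul_inv_rev, hinv, mul_assoc] using this
  have hc' : a * e₁ * a⁻¹ * e₁ = e₁ * a⁻¹ * e₁ * a := by
    have := congrArg (fun x => a * x * a) h2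
    simpa [mul_assoc] using this
  have hc : Commute a (e₁ * a⁻¹ * e₁ * a) := by
    show a * (e₁ * a⁻¹ * e₁ * a) = (e₁ * a⁻¹ * e₁ * a) * a
    calc a * (e₁ * a⁻¹ * e₁ * a) = (a * e₁ * a⁻¹ * e₁) * a := by
          simp [mul_assoc]
      _ = (e₁ * a⁻¹ * e₁ * a) * a := by rw [hc']
  have heca : a⁻¹ * e₁ * a = e₁ * (e₁ * a⁻¹ * e₁ * a) := by
    have h4 : e₁ * (e₁ * a⁻¹ * e₁ * a) = (e₁ * e₁) * (a⁻¹ * e₁ * a) := by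
      simp [mul_assoc]
    rw [h4, ← sq, he, one_mul]
  have key : ∀ s : ℕ, a⁻¹ ^ s * e₁ * a ^ s = e₁ * (e₁ * a⁻¹ * e₁ * a) ^ s := by
    intro s
    induction s with
    | zero => simp
    | succ n ih =>
      have h3 : a⁻¹ ^ (n + 1) * e₁ * a ^ (n + 1)
          = a⁻¹ * (a⁻¹ ^ n * e₁ * a ^ n) * a := by
        rw [pow_succ' a⁻¹, pow_succ a]; group
      rw [h3, ih]
      calc a⁻¹ * (e₁ * (e₁ * a⁻¹ * e₁ * a) ^ n) * a
          = a⁻¹ * (e₁ * ((e₁ * a⁻¹ * e₁ * a) ^ n * a)) := by simp [mul_assoc]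
        _ = a⁻¹ * (e₁ * (a * (e₁ * a⁻¹ * e₁ * a) ^ n)) := by
            rw [← (hc.pow_right n).eq]
        _ = (a⁻¹ * e₁ * a) * (e₁ * a⁻¹ * e₁ * a) ^ n := by simp [mul_assoc]
        _ = e₁ * (e₁ * a⁻¹ * e₁ * a) * (e₁ * a⁻¹ * e₁ * a) ^ n := by rw [heca]
        _ = e₁ * (e₁ * a⁻¹ * e₁ * a) ^ (n + 1) := by
            rw [mul_assoc, ← pow_succ']
  intro s
  refine ⟨key s, fun p => ?_⟩
  rw [key s]
  have he₁ : e₁ ∈ Subgroup.closure ({a ^ p, a⁻¹ * e₁ * a, e₁} : Set G) :=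
    Subgroup.subset_closure (by simp)
  have hae : a⁻¹ * e₁ * a ∈ Subgroup.closure ({a ^ p, a⁻¹ * e₁ * a, e₁} : Set G) :=
    Subgroup.subset_closure (by simp)
  have hcmem : e₁ * a⁻¹ * e₁ * a ∈ Subgroup.closure ({a ^ p, a⁻¹ * e₁ * a, e₁} : Set G) := by
    have h5 : e₁ * a⁻¹ * e₁ * a = e₁ * (a⁻¹ * e₁ * a) := by
      simp [mul_assoc]
    rw [h5]; exact mul_mem he₁ hae
  exact mul_mem he₁ (pow_mem hcmem s)
end

section
/- With the commuting Dunkl operators dᵢ for G(m,1,N) (satisfying [dᵢ,dⱼ] = 0, 𝒫ᵢⱼ dᵢ 𝒫ᵢⱼ = dⱼ − λΣ_{s∈ℤ/mℤ}𝒬ᵢˢ𝒫ᵢⱼ𝒬ᵢ^{−s} for j = i+1, [dᵢ, 𝒬ⱼ] = 0, and [dᵢ, X] = 0 for operators X with indices disjoint from i), define I⁽ᵏ⁾ = Σ_{i=1}^{N} dᵢᵏ for k ≥ 1. Then [I⁽ᵏ⁾, I⁽ˡ⁾] = 0, [I⁽ᵏ⁾, 𝒫ᵢⱼ] = 0, and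 [I⁽ᵏ⁾, 𝒬ᵢ] = 0 for all k, l ≥ 1 and all i ≠ j. -/
open Finset


private lemma stmt16_conj_pow {A : Type*} [Ring A] (p x : A) (hp : p * p = 1) :
    ∀ k, p * x ^ k * p = (p * x * p) ^ k := by
  intro k
  induction k with
  | zero => simpa using hp
  | succ n ih =>
      rw [pow_succ, pow_succ, ← ih]
      calc p * (x ^ n * x) * p = p * x ^ n * (p * p) * x * p := by rw [hp]; noncomm_ring
        _ = p * x ^ n * p * (p * x * p) := by noncomm_ring

private lemma two_step {A : Type*} [Ring A] (x y : A) (h : x * y = y * x) (n : ℕ) :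
    x ^ (n+2) + y ^ (n+2) = (x + y) * (x ^ (n+1) + y ^ (n+1)) - x * y * (x ^ n + y ^ n) := by
  have hc : Commute x y := h
  have e1 : y * x ^ (n+1) = x * y * x ^ n := by
    rw [pow_succ' x n, ← mul_assoc, ← h]
  have e2 : x * y ^ (n+1) = x * y * y ^ n := by
    rw [pow_succ' y n, ← mul_assoc]
  have e3 : x * x ^ (n+1) = x ^ (n+2) := (pow_succ' x (n+1)).symm
  have e4 : y * y ^ (n+1) = y ^ (n+2) := (pow_succ' y (n+1)).symm
  rw [add_mul, mul_add, mul_add, mul_add, e1, e2, e3, e4]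
  abel

private lemma newton_aux {A : Type*} [Ring A] (a b p : A) (hp : p * p = 1)
    (hab : a * b = b * a)
    (hsum : p * (a + b) * p = a + b)
    (hprod : p * (a * b) * p = a * b) :
    ∀ k, p * (a ^ k + b ^ k) * p = a ^ k + b ^ k := by
  set a' := p * a * p with ha'
  set b' := p * b * p with hb'
  have hsum' : a' + b' = a + b := by
    rw [ha', hb', ← hsum]; noncomm_ring
  have hprod' : a' * b' = a * b := by
    rw [ha', hb', ← hprod]
    calc p * a * p * (p * b * p) = p * a * (p * p) * b * p := by noncomm_ring
      _ = p * (a * b) * p := by rw [hp]; noncomm_ring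
  have hprod'' : b' * a' = a * b := by
    rw [ha', hb']
    calc p * b * p * (p * a * p) = p * b * (p * p) * a * p := by noncomm_ring
      _ = p * (b * a) * p := by rw [hp]; noncomm_ring
      _ = p * (a * b) * p := by rw [hab]
      _ = a * b := hprod
  have hab' : a' * b' = b' * a' := by rw [hprod', hprod'']
  have main : ∀ k, a' ^ k + b' ^ k = a ^ k + b ^ k := by
    intro k
    induction k using Nat.strong_induction_on with
    | _ k ih =>
      match k with
      | 0 => simp
      | 1 => simpa using hsum'
      | (n+2) =>
          rw [two_step a' b' hab' n, two_step a b hab n, ih (n+1) (by omega), ih n (by omega),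
            hsum', hprod']
  intro k
  rw [mul_add, add_mul, stmt16_conj_pow p a hp, stmt16_conj_pow p b hp]
  exact main k

private lemma stmt16_reindex {A : Type*} [Ring A] {m : ℕ} (hm : 1 ≤ m) (x y : A)
    (hxy : x * y = y * x) (hx : x ^ m = 1) (hy : y ^ m = 1) :
    ∑ s ∈ range m, x ^ s * y ^ (m - s) = ∑ s ∈ range m, y ^ s * x ^ (m - s) := by
  have hc : Commute x y := hxy
  refine Finset.sum_nbij' (fun s => (m - s) % m) (fun s => (m - s) % m) ?_ ?_ ?_ ?_ ?_
  · intro s _; exact mem_range.mpr (Nat.mod_lt _ (by omega))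
  · intro s _; exact mem_range.mpr (Nat.mod_lt _ (by omega))
  · intro s hs
    rw [mem_range] at hs
    rcases Nat.eq_zero_or_pos s with h0 | h1
    · subst h0; simp [Nat.mod_self]
    · have e1 : (m - s) % m = m - s := Nat.mod_eq_of_lt (by omega)
      rw [e1, Nat.mod_eq_of_lt (by omega)]; omega
  · intro s hs
    rw [mem_range] at hs
    rcases Nat.eq_zero_or_pos s with h0 | h1
    · subst h0; simp [Nat.mod_self]
    · have e1 : (m - s) % m = m - s := Nat.mod_eq_of_lt (by omega)
      rw [e1, Nat.mod_eq_of_lt (by omega)]; omega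
  · intro s hs
    rw [mem_range] at hs
    rcases Nat.eq_zero_or_pos s with h0 | h1
    · subst h0; simp [Nat.mod_self, hx, hy]
    · have e1 : (m - s) % m = m - s := Nat.mod_eq_of_lt (by omega)
      rw [e1]
      have e : m - (m - s) = s := by omega
      rw [e, (hc.pow_pow s (m - s)).eq]

private lemma stmt16_shift {A : Type*} [Ring A] {m : ℕ} (hm : 1 ≤ m) (x y : A)
    (hx : x ^ m = 1) (hy : y ^ m = 1) {s : ℕ} (hs : s < m) :
    ∑ t ∈ range m, x ^ (s + t) * y ^ ((m - s) + (m - t)) =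
      ∑ u ∈ range m, x ^ u * y ^ (m - u) := by
  have key : ∀ t < m, x ^ (s + t) * y ^ ((m - s) + (m - t)) =
      x ^ ((s + t) % m) * y ^ (m - (s + t) % m) := by
    intro t ht
    rw [pow_eq_pow_mod (s + t) hx]
    congr 1
    rw [pow_eq_pow_mod ((m - s) + (m - t)) hy, pow_eq_pow_mod (m - (s + t) % m) hy]
    congr 1
    rcases Nat.lt_or_ge (s + t) m with h | h
    · rw [Nat.mod_eq_of_lt h]
      have e : (m - s) + (m - t) = m + (m - (s + t)) := by omega
      rw [e, Nat.add_mod_left]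
    · have e0 : (s + t) % m = s + t - m := by
        rw [Nat.mod_eq_sub_mod h, Nat.mod_eq_of_lt (by omega)]
      rw [e0]
      congr 1
      omega
  calc ∑ t ∈ range m, x ^ (s + t) * y ^ ((m - s) + (m - t))
      = ∑ t ∈ range m, x ^ ((s + t) % m) * y ^ (m - (s + t) % m) := by
        exact Finset.sum_congr rfl fun t ht => key t (mem_range.mp ht)
    _ = ∑ u ∈ range m, x ^ u * y ^ (m - u) := by
        refine Finset.sum_nbij' (fun t => (s + t) % m) (fun u => (u + (m - s)) % m)
          ?_ ?_ ?_ ?_ ?_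
        · intro t _; exact mem_range.mpr (Nat.mod_lt _ (by omega))
        · intro t _; exact mem_range.mpr (Nat.mod_lt _ (by omega))
        · intro t ht
          rw [mem_range] at ht
          rw [Nat.mod_add_mod, show s + t + (m - s) = t + m by omega, Nat.add_mod_right,
            Nat.mod_eq_of_lt ht]
        · intro u hu
          rw [mem_range] at hu
          rw [Nat.add_mod_mod, show s + (u + (m - s)) = u + m by omega, Nat.add_mod_right,
            Nat.mod_eq_of_lt hu]
        · intro t _; rfl
private lemma stmt16_adj {A : Type*} [Ring A] [Algebra ℂ A] {m : ℕ} (hm : 1 ≤ m) (lam : ℂ)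
    (a b p qi qj : A)
    (hp : p * p = 1)
    (hab : a * b = b * a)
    (haqi : a * qi = qi * a) (hbqi : b * qi = qi * b)
    (hqq : qi * qj = qj * qi)
    (hqim : qi ^ m = 1) (hqjm : qj ^ m = 1)
    (hpqi : p * qi = qj * p) (hpqj : p * qj = qi * p)
    (hex : p * a * p = b - lam • ∑ s ∈ range m, qi ^ s * p * qi ^ (m - s)) :
    p * (a + b) * p = a + b ∧ p * (a * b) * p = a * b := by
  set S : A := ∑ s ∈ range m, qi ^ s * p * qi ^ (m - s) with hSdef
  set T : A := ∑ s ∈ range m, qi ^ s * qj ^ (m - s) with hTdef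
  have hcq : Commute qi qj := hqq
  -- powers of the P-Q relations
  have hpqin : ∀ s : ℕ, p * qi ^ s = qj ^ s * p := by
    intro s
    induction s with
    | zero => simp
    | succ n ih => rw [pow_succ, pow_succ, ← mul_assoc, ih, mul_assoc, hpqi, ← mul_assoc]
  have hpqjn : ∀ s : ℕ, p * qj ^ s = qi ^ s * p := by
    intro s
    induction s with
    | zero => simp
    | succ n ih => rw [pow_succ, pow_succ, ← mul_assoc, ih, mul_assoc, hpqj, ← mul_assoc]
  -- the reindexed sum
  have hT' : ∑ s ∈ range m, qj ^ s * qi ^ (m - s) = T :=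
    stmt16_reindex hm qj qi hqq.symm hqjm hqim
  -- p commutes with T
  have hpT : p * T = T * p := by
    calc p * T = ∑ s ∈ range m, p * (qi ^ s * qj ^ (m - s)) := by rw [hTdef, Finset.mul_sum]
      _ = ∑ s ∈ range m, (qj ^ s * qi ^ (m - s)) * p := by
          refine Finset.sum_congr rfl fun s _ => ?_
          calc p * (qi ^ s * qj ^ (m - s)) = (p * qi ^ s) * qj ^ (m - s) := by noncomm_ring
            _ = qj ^ s * (p * qj ^ (m - s)) := by rw [hpqin]; noncomm_ring
            _ = (qj ^ s * qi ^ (m - s)) * p := by rw [hpqjn]; noncomm_ring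
      _ = (∑ s ∈ range m, qj ^ s * qi ^ (m - s)) * p := by rw [Finset.sum_mul]
      _ = T * p := by rw [hT']
  -- S * p = T and p * S = T
  have hSp : S * p = T := by
    rw [hSdef, Finset.sum_mul, hTdef]
    refine Finset.sum_congr rfl fun s _ => ?_
    calc qi ^ s * p * qi ^ (m - s) * p = qi ^ s * (p * qi ^ (m - s)) * p := by noncomm_ring
      _ = qi ^ s * (qj ^ (m - s) * p) * p := by rw [hpqin]
      _ = qi ^ s * qj ^ (m - s) * (p * p) := by noncomm_ring
      _ = qi ^ s * qj ^ (m - s) := by rw [hp, mul_one]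
  have hpS : p * S = T := by
    calc p * S = ∑ s ∈ range m, p * (qi ^ s * p * qi ^ (m - s)) := by rw [hSdef, Finset.mul_sum]
      _ = ∑ s ∈ range m, qj ^ s * qi ^ (m - s) := by
          refine Finset.sum_congr rfl fun s _ => ?_
          calc p * (qi ^ s * p * qi ^ (m - s)) = (p * qi ^ s) * p * qi ^ (m - s) := by noncomm_ring
            _ = qj ^ s * (p * p) * qi ^ (m - s) := by rw [hpqin]; noncomm_ring
            _ = qj ^ s * qi ^ (m - s) := by rw [hp]; noncomm_ring
      _ = T := hT'
  have hS : S = T * p := by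
    calc S = S * (p * p) := by rw [hp, mul_one]
      _ = (S * p) * p := by rw [mul_assoc]
      _ = T * p := by rw [hSp]
  have hpSp : p * S * p = S := by rw [hpS, ← hS]
  -- conjugation of b
  have hex2 : p * b * p = a + lam • S := by
    have hb : b = p * a * p + lam • S := by rw [hex]; abel
    calc p * b * p = p * (p * a * p) * p + lam • (p * S * p) := by
          rw [hb]; rw [mul_add, add_mul, mul_smul_comm, smul_mul_assoc]
      _ = (p * p) * a * (p * p) + lam • S := by rw [hpSp]; noncomm_ring
      _ = a + lam • S := by rw [hp]; noncomm_ring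
  -- T commutes with powers of qi
  have hTq : ∀ s : ℕ, qi ^ s * T = T * qi ^ s := by
    intro s
    rw [hTdef, Finset.mul_sum, Finset.sum_mul]
    refine Finset.sum_congr rfl fun t _ => ?_
    have c1 : Commute (qi ^ s) (qi ^ t * qj ^ (m - t)) :=
      ((Commute.refl qi).pow_pow s t).mul_right ((hcq.pow_pow s (m - t)))
    exact c1.eq
  -- T * T = m • T
  have hTT : T * T = m • T := by
    rw [hTdef, Finset.sum_mul]
    have step : ∀ s ∈ range m, (qi ^ s * qj ^ (m - s)) * T = T := by
      intro s hs
      rw [mem_range] at hs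
      rw [hTdef, Finset.mul_sum]
      have e : ∀ t, (qi ^ s * qj ^ (m - s)) * (qi ^ t * qj ^ (m - t)) =
          qi ^ (s + t) * qj ^ ((m - s) + (m - t)) := by
        intro t
        rw [pow_add, pow_add]
        calc qi ^ s * qj ^ (m - s) * (qi ^ t * qj ^ (m - t))
            = qi ^ s * (qj ^ (m - s) * qi ^ t) * qj ^ (m - t) := by noncomm_ring
          _ = qi ^ s * (qi ^ t * qj ^ (m - s)) * qj ^ (m - t) := by
              rw [(hcq.symm.pow_pow (m - s) t).eq]
          _ = qi ^ s * qi ^ t * (qj ^ (m - s) * qj ^ (m - t)) := by noncomm_ring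
      calc ∑ t ∈ range m, (qi ^ s * qj ^ (m - s)) * (qi ^ t * qj ^ (m - t))
          = ∑ t ∈ range m, qi ^ (s + t) * qj ^ ((m - s) + (m - t)) :=
            Finset.sum_congr rfl fun t _ => e t
        _ = T := stmt16_shift hm qi qj hqim hqjm hs
    rw [Finset.sum_congr rfl step, Finset.sum_const, card_range]
  -- S * S = m • T
  have hSS : S * S = m • T := by
    calc S * S = T * (p * T) * p := by rw [hS]; noncomm_ring
      _ = T * T * (p * p) := by rw [hpT]; noncomm_ring
      _ = m • T := by rw [hp, mul_one, hTT]
  -- the key relation: S * a = b * S - lam • (m • T)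
  have hSa : b * S - S * a = lam • (m • T) := by
    have hterm : ∀ s ∈ range m, (qi ^ s * p * qi ^ (m - s)) * a =
        b * (qi ^ s * p * qi ^ (m - s)) - lam • T := by
      intro s hs
      rw [mem_range] at hs
      have caq : Commute a (qi ^ (m - s)) := (Commute.pow_right haqi (m - s))
      have cbq : Commute b (qi ^ s) := (Commute.pow_right hbqi s)
      have e1 : (qi ^ s * p * qi ^ (m - s)) * a = qi ^ s * (p * a * p) * (p * qi ^ (m - s)) := by
        calc (qi ^ s * p * qi ^ (m - s)) * a = qi ^ s * p * (qi ^ (m - s) * a) := by noncomm_ring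
          _ = qi ^ s * p * (a * qi ^ (m - s)) := by rw [caq.symm.eq]
          _ = qi ^ s * (p * a * (p * p)) * qi ^ (m - s) := by rw [hp]; noncomm_ring
          _ = qi ^ s * (p * a * p) * (p * qi ^ (m - s)) := by noncomm_ring
      rw [e1, hex]
      have e2 : qi ^ s * (b - lam • S) * (p * qi ^ (m - s)) =
          qi ^ s * b * (p * qi ^ (m - s)) - lam • (qi ^ s * S * (p * qi ^ (m - s))) := by
        rw [mul_sub, sub_mul, mul_smul_comm, smul_mul_assoc]
      rw [e2]
      congr 1
      · calc qi ^ s * b * (p * qi ^ (m - s)) = (qi ^ s * b) * p * qi ^ (m - s) := by noncomm_ring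
          _ = (b * qi ^ s) * p * qi ^ (m - s) := by rw [cbq.eq]
          _ = b * (qi ^ s * p * qi ^ (m - s)) := by noncomm_ring
      · congr 1
        calc qi ^ s * S * (p * qi ^ (m - s)) = qi ^ s * (S * p) * qi ^ (m - s) := by noncomm_ring
          _ = qi ^ s * T * qi ^ (m - s) := by rw [hSp]
          _ = T * (qi ^ s * qi ^ (m - s)) := by rw [hTq s]; noncomm_ring
          _ = T * qi ^ m := by rw [← pow_add]; congr 2; omega
          _ = T := by rw [hqim, mul_one]
    have : S * a = b * S - lam • (m • T) := by
      calc S * a = ∑ s ∈ range m, (qi ^ s * p * qi ^ (m - s)) * a := by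
            rw [hSdef, Finset.sum_mul]
        _ = ∑ s ∈ range m, (b * (qi ^ s * p * qi ^ (m - s)) - lam • T) :=
            Finset.sum_congr rfl hterm
        _ = b * S - lam • (m • T) := by
            rw [Finset.sum_sub_distrib, ← Finset.mul_sum, ← hSdef, Finset.sum_const, card_range,
              smul_comm m lam T]
    rw [this]; abel
  constructor
  · -- sum part
    calc p * (a + b) * p = p * a * p + p * b * p := by noncomm_ring
      _ = (b - lam • S) + (a + lam • S) := by rw [hex, hex2]
      _ = a + b := by abel
  · -- product part
    calc p * (a * b) * p = (p * a * p) * (p * b * p) := by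
          rw [show (p * a * p) * (p * b * p) = p * a * (p * p) * b * p by noncomm_ring, hp]
          noncomm_ring
      _ = (b - lam • S) * (a + lam • S) := by rw [hex, hex2]
      _ = b * a + (lam • (b * S) - lam • (S * a)) - (lam * lam) • (S * S) := by
          rw [sub_mul, mul_add, mul_add, mul_smul_comm, smul_mul_assoc, smul_mul_assoc,
            mul_smul_comm, smul_smul]
          abel
      _ = b * a + lam • (b * S - S * a) - (lam * lam) • (m • T) := by rw [smul_sub, hSS]
      _ = b * a + (lam * lam) • (m • T) - (lam * lam) • (m • T) := by rw [hSa, smul_smul]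
      _ = a * b := by rw [hab]; abel

/-- The power sums `I⁽ᵏ⁾ = Σᵢ dᵢᵏ` of commuting Dunkl operators for `G(m,1,N)` commute with
each other and with all the group operators `𝒫ᵢⱼ`, `𝒬ᵢ`. Here `d`, `P`, `Q` are elements of
an associative `ℂ`-algebra `A` satisfying the relations of the extended degenerate affine
Hecke algebra `H_λ(m,1,N)` listed as hypotheses (with `𝒬ᵢ⁻ˢ` written `Qᵢ^{m−s}`, using
`Qᵢᵐ = 1`). -/
theorem stmt16 (N m : ℕ) (hm : 1 ≤ m) (A : Type*) [Ring A] [Algebra ℂ A] (lam : ℂ)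
    (d Q : Fin N → A) (P : Fin N → Fin N → A)
    -- commutativity of the Dunkl operators and with the Q's
    (hdd : ∀ i j, d i * d j = d j * d i)
    (hdQ : ∀ i j, d i * Q j = Q j * d i)
    -- the group relations of G(m,1,N)
    (hPsymm : ∀ i j, P i j = P j i)
    (hP2 : ∀ i j, i ≠ j → P i j * P i j = 1)
    (hQm : ∀ i, Q i ^ m = 1)
    (hQQ : ∀ i j, Q i * Q j = Q j * Q i)
    (hPQ : ∀ i j, i ≠ j → P i j * Q i = Q j * P i j)
    (hPQdisj : ∀ i j k, i ≠ j → k ≠ i → k ≠ j → P i j * Q k = Q k * P i j)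
    (hPP : ∀ i j k, i ≠ j → j ≠ k → i ≠ k →
      P i j * P j k = P i k * P i j ∧ P i k * P i j = P j k * P i k)
    (hPPdisj : ∀ i j k l, i ≠ k → i ≠ l → j ≠ k → j ≠ l → P i j * P k l = P k l * P i j)
    -- operators with disjoint indices commute
    (hPd : ∀ i j k, i ≠ j → k ≠ i → k ≠ j → P i j * d k = d k * P i j)
    -- the exchange relation 𝒫_{i,i+1} d_i 𝒫_{i,i+1} = d_{i+1} − λ Σ_s 𝒬ᵢˢ 𝒫_{i,i+1} 𝒬ᵢ⁻ˢ
    (hexch : ∀ i j : Fin N, (i : ℕ) + 1 = (j : ℕ) →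
      P i j * d i * P i j = d j - lam • ∑ s ∈ Finset.range m, Q i ^ s * P i j * Q i ^ (m - s)) :
    let I : ℕ → A := fun k => ∑ i, d i ^ k
    (∀ k l : ℕ, 1 ≤ k → 1 ≤ l → I k * I l = I l * I k) ∧
    (∀ (k : ℕ) (i j : Fin N), 1 ≤ k → i ≠ j → I k * P i j = P i j * I k) ∧
    (∀ (k : ℕ) (i : Fin N), 1 ≤ k → I k * Q i = Q i * I k) := by
  intro I
  -- commutation with adjacent transpositions
  have Hadj : ∀ (i j : Fin N), (i : ℕ) + 1 = (j : ℕ) → ∀ k : ℕ,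
      I k * P i j = P i j * I k := by
    intro i j hij k
    have hne : i ≠ j := by intro h; subst h; omega
    have hp := hP2 i j hne
    have hpqj : P i j * Q j = Q i * P i j := by
      rw [hPsymm i j]; exact hPQ j i hne.symm
    obtain ⟨hsum, hprod⟩ := stmt16_adj hm lam (d i) (d j) (P i j) (Q i) (Q j) hp
      (hdd i j) (hdQ i i) (hdQ j i) (hQQ i j) (hQm i) (hQm j) (hPQ i j hne) hpqj (hexch i j hij)
    have hNewt := newton_aux (d i) (d j) (P i j) hp (hdd i j) hsum hprod
    have key : P i j * I k * P i j = I k := by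
      have expand : P i j * I k * P i j = ∑ t, P i j * d t ^ k * P i j := by
        simp only [I, Finset.mul_sum, Finset.sum_mul]
      rw [expand]
      have hsub : ({i, j} : Finset (Fin N)) ⊆ univ := subset_univ _
      rw [show (I k : A) = ∑ t, d t ^ k from rfl,
        ← Finset.sum_sdiff hsub, ← Finset.sum_sdiff (f := fun t => d t ^ k) hsub]
      congr 1
      · refine Finset.sum_congr rfl fun t ht => ?_
        simp only [Finset.mem_sdiff, Finset.mem_insert, Finset.mem_singleton, Finset.mem_univ,
          true_and, not_or] at ht
        obtain ⟨hti, htj⟩ := ht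
        rw [stmt16_conj_pow _ _ hp]
        have : P i j * d t * P i j = d t := by
          rw [hPd i j t hne hti htj, mul_assoc, hp, mul_one]
        rw [this]
      · rw [Finset.sum_pair hne, Finset.sum_pair hne, ← hNewt k]
        noncomm_ring
    calc I k * P i j = (P i j * P i j) * I k * P i j := by rw [hp, one_mul]
      _ = P i j * (P i j * I k * P i j) := by noncomm_ring
      _ = P i j * I k := by rw [key]
  -- commutation with all transpositions, by induction on the distance
  have Hgen : ∀ n : ℕ, ∀ (i j : Fin N), (j : ℕ) - (i : ℕ) = n → (i : ℕ) < (j : ℕ) →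
      ∀ k, I k * P i j = P i j * I k := by
    intro n
    induction n using Nat.strong_induction_on with
    | _ n ih =>
      intro i j hn hlt k
      rcases Nat.lt_or_ge ((i : ℕ) + 1) (j : ℕ) with hgap | hadj
      · have hj1 : (j : ℕ) - 1 < N := by have := j.isLt; omega
        set b : Fin N := ⟨(j : ℕ) - 1, hj1⟩ with hbdef
        have hbv : (b : ℕ) = (j : ℕ) - 1 := rfl
        have hne_ib : i ≠ b := by
          intro h; rw [show (i:ℕ) = (b:ℕ) from congrArg Fin.val h] at hgap; omega
        have hne_bj : b ≠ j := by
          intro h; rw [show (b:ℕ) = (j:ℕ) from congrArg Fin.val h] at hbv; omega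
        have hne_ij : i ≠ j := by intro h; rw [congrArg Fin.val h] at hlt; omega
        have hdecomp : P i j = P i b * P b j * P i b := by
          have h1 := (hPP i b j hne_ib hne_bj hne_ij).1
          rw [h1, mul_assoc, hP2 i b hne_ib, mul_one]
        have c1 : I k * P i b = P i b * I k :=
          ih ((b : ℕ) - (i : ℕ)) (by omega) i b rfl (by omega) k
        have c2 : I k * P b j = P b j * I k := Hadj b j (by omega) k
        rw [hdecomp]
        calc I k * (P i b * P b j * P i b)
            = (I k * P i b) * P b j * P i b := by noncomm_ring
          _ = P i b * (I k * P b j) * P i b := by rw [c1]; noncomm_ring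
          _ = P i b * P b j * (I k * P i b) := by rw [c2]; noncomm_ring
          _ = P i b * P b j * P i b * I k := by rw [c1]; noncomm_ring
      · have : (i : ℕ) + 1 = (j : ℕ) := by omega
        exact Hadj i j this k
  refine ⟨?_, ?_, ?_⟩
  · intro k l _ _
    have : Commute (I k) (I l) := by
      refine Commute.sum_left _ _ _ fun i _ => ?_
      refine Commute.sum_right _ _ _ fun j _ => ?_
      exact (show Commute (d i) (d j) from hdd i j).pow_pow k l
    exact this
  · intro k i j _ hij
    rcases Nat.lt_or_ge (i : ℕ) (j : ℕ) with h | h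
    · exact Hgen _ i j rfl h k
    · have hlt : (j : ℕ) < (i : ℕ) := by
        rcases Nat.lt_or_ge (j : ℕ) (i : ℕ) with h' | h'
        · exact h'
        · exact absurd (Fin.ext (le_antisymm h' h)) hij
      rw [hPsymm i j]
      exact Hgen _ j i rfl hlt k
  · intro k i _
    simp only [I, Finset.sum_mul, Finset.mul_sum]
    exact Finset.sum_congr rfl fun t _ =>
      ((show Commute (d t) (Q i) from hdQ t i).pow_left k).eq
end

section
/- Let m ≥ 1, τ = exp(2πi/m), and let Zᵢ = qᵢ∂/∂qᵢ + mλ Σ_{j≠i} [qᵢ/(qᵢ−qⱼ)]𝒫ᵢⱼ − mλ Σ_{j>i} 𝒫ᵢⱼ be the trigonometric A_{N−1} Dunkl operator with coupling mλ, and dᵢ the cyclic Dunkl operator for G(m,1,N) with coupling λ (as defined above). Then dᵢ = (1/m) Σ_{s=0}^{m−1} 𝒬ᵢ^{−s} Zᵢ 𝒬ᵢ^{s}, i.e. dᵢ = Πᵢ⁰(Zᵢ) is the image of Zᵢ under the zero-weight projector of the conjugation action of 𝒬ᵢ. -/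
open Finset Complex

theorem aux_sum_comp (F : Type*) [Field F] [Algebra ℂ F] {ι : Type*} (s : Finset ι)
    (f : ι → (F →ₗ[ℂ] F)) (g : F →ₗ[ℂ] F) :
    (∑ j ∈ s, f j) ∘ₗ g = ∑ j ∈ s, f j ∘ₗ g := by
  ext x; simp

theorem aux_comp_sum (F : Type*) [Field F] [Algebra ℂ F] {ι : Type*} (s : Finset ι)
    (f : ι → (F →ₗ[ℂ] F)) (g : F →ₗ[ℂ] F) :
    g ∘ₗ (∑ j ∈ s, f j) = ∑ j ∈ s, g ∘ₗ f j := by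
  ext x; simp

theorem aux_conj_mulLeft (F : Type*) [Field F] [Algebra ℂ F] (A : F ≃ₐ[ℂ] F) (c : F) :
    A.toLinearMap ∘ₗ LinearMap.mulLeft ℂ c = LinearMap.mulLeft ℂ (A c) ∘ₗ A.toLinearMap := by
  ext x; simp [map_mul]

/-- The cyclic Dunkl operator `dᵢ` for `G(m,1,N)` with coupling `λ` is the image of the
trigonometric `A_{N−1}` Dunkl operator `Zᵢ` with coupling `mλ` under the zero-weight projector
of the conjugation action of `𝒬ᵢ`: `dᵢ = (1/m) Σ_{s=0}^{m−1} 𝒬ᵢ⁻ˢ Zᵢ 𝒬ᵢˢ = Πᵢ⁰(Zᵢ)`.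
The setup is as for the commutativity theorem: `F` is a field of functions of `q₁,…,q_N`,
`E i = qᵢ∂/∂qᵢ`, `Qa i` the rotation `qᵢ ↦ τqᵢ` and `Pa i j` the transposition of `qᵢ, qⱼ`. -/
theorem stmt17 (N m : ℕ) (hm : 1 ≤ m) (lam : ℂ)
    (F : Type*) [Field F] [Algebra ℂ F]
    (q : Fin N → F) (E : Fin N → (F →ₗ[ℂ] F))
    (Qa : Fin N → (F ≃ₐ[ℂ] F)) (Pa : Fin N → Fin N → (F ≃ₐ[ℂ] F))
    (τ : ℂ) (hτ : τ = Complex.exp (2 * Real.pi * Complex.I / m))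
    (hLeib : ∀ i (f g : F), E i (f * g) = f * E i g + E i f * g)
    (hEq : ∀ i j, E i (q j) = if i = j then q i else 0)
    (hQq : ∀ i j, Qa i (q j) = if i = j then τ • q j else q j)
    (hPq : ∀ i j k, Pa i j (q k) = q (Equiv.swap i j k))
    (hPsymm : ∀ i j, Pa i j = Pa j i)
    (hP2 : ∀ i j, Pa i j * Pa i j = 1)
    (hQm : ∀ i, Qa i ^ m = 1)
    (hQQ : ∀ i j, Qa i * Qa j = Qa j * Qa i)
    (hPQ : ∀ i j, Pa i j * Qa i = Qa j * Pa i j)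
    (hPQdisj : ∀ i j k, k ≠ i → k ≠ j → Pa i j * Qa k = Qa k * Pa i j)
    (hPE : ∀ i j k, (Pa i j).toLinearMap ∘ₗ E k = E (Equiv.swap i j k) ∘ₗ (Pa i j).toLinearMap)
    (hQE : ∀ i j, (Qa i).toLinearMap ∘ₗ E j = E j ∘ₗ (Qa i).toLinearMap)
    (hne : ∀ (i j : Fin N) (s : ℕ), i ≠ j → q i - τ ^ s • q j ≠ 0) :
    -- the A_{N−1} Dunkl operator with coupling mλ
    let Z : Fin N → (F →ₗ[ℂ] F) := fun i =>
      E i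
      + ((m : ℂ) * lam) • ∑ j ∈ Finset.univ.erase i,
          (LinearMap.mulLeft ℂ (q i * (q i - q j)⁻¹)) ∘ₗ (Pa i j).toLinearMap
      - ((m : ℂ) * lam) • ∑ j ∈ Finset.univ.filter (fun j => i < j), (Pa i j).toLinearMap
    -- the cyclic Dunkl operator for G(m,1,N) with coupling λ
    let d : Fin N → (F →ₗ[ℂ] F) := fun i =>
      E i
      + lam • ∑ j ∈ Finset.univ.erase i, ∑ s ∈ Finset.range m,
          (LinearMap.mulLeft ℂ (q i * (q i - τ ^ s • q j)⁻¹)) ∘ₗ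
            ((Qa i)⁻¹ ^ s * Pa i j * Qa i ^ s : F ≃ₐ[ℂ] F).toLinearMap
      - lam • ∑ j ∈ Finset.univ.filter (fun j => i < j), ∑ s ∈ Finset.range m,
          ((Qa i)⁻¹ ^ s * Pa i j * Qa i ^ s : F ≃ₐ[ℂ] F).toLinearMap
    ∀ i, d i = (m : ℂ)⁻¹ • ∑ s ∈ Finset.range m,
      ((Qa i)⁻¹ ^ s : F ≃ₐ[ℂ] F).toLinearMap ∘ₗ Z i ∘ₗ ((Qa i) ^ s : F ≃ₐ[ℂ] F).toLinearMap := by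
  intro Z d i
  have hτ0 : τ ≠ 0 := by rw [hτ]; exact Complex.exp_ne_zero _
  have hm0 : (m : ℂ) ≠ 0 := Nat.cast_ne_zero.mpr (by omega)
  set gi := Qa i with hgi
  -- action of gi⁻¹ ^ s on the generators
  have hinv_qi : (gi⁻¹ : F ≃ₐ[ℂ] F) (q i) = τ⁻¹ • q i := by
    have h1 : gi (q i) = τ • q i := by simpa using hQq i i
    have h2 : (gi⁻¹ : F ≃ₐ[ℂ] F) (gi (q i)) = q i := by
      simp [← AlgEquiv.mul_apply]
    rw [h1, map_smul] at h2
    rw [eq_comm, inv_smul_eq_iff₀ hτ0, eq_comm]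
    exact h2
  have hinv_qj : ∀ j, j ≠ i → (gi⁻¹ : F ≃ₐ[ℂ] F) (q j) = q j := by
    intro j hj
    have h1 : gi (q j) = q j := by simpa [Ne.symm hj] using hQq i j
    have h2 : (gi⁻¹ : F ≃ₐ[ℂ] F) (gi (q j)) = q j := by
      simp [← AlgEquiv.mul_apply]
    rwa [h1] at h2
  have hpow_qi : ∀ s : ℕ, ((gi⁻¹ ^ s : F ≃ₐ[ℂ] F)) (q i) = (τ ^ s)⁻¹ • q i := by
    intro s
    induction s with
    | zero => simp
    | succ s ih =>
      rw [pow_succ, AlgEquiv.mul_apply, hinv_qi, map_smul, ih, smul_smul, pow_succ,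
        mul_inv, mul_comm]
  have hpow_qj : ∀ (s : ℕ) (j : Fin N), j ≠ i → ((gi⁻¹ ^ s : F ≃ₐ[ℂ] F)) (q j) = q j := by
    intro s j hj
    induction s with
    | zero => simp
    | succ s ih => rw [pow_succ, AlgEquiv.mul_apply, hinv_qj j hj, ih]
  -- coefficient transformation
  have hcoef : ∀ (s : ℕ) (j : Fin N), j ≠ i →
      ((gi⁻¹ ^ s : F ≃ₐ[ℂ] F)) (q i * (q i - q j)⁻¹) = q i * (q i - τ ^ s • q j)⁻¹ := by
    intro s j hj
    have hts : (τ : ℂ) ^ s ≠ 0 := pow_ne_zero _ hτ0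
    rw [map_mul, map_inv₀, map_sub, hpow_qi, hpow_qj s j hj]
    have h3 : (τ ^ s)⁻¹ • q i - q j = (τ ^ s)⁻¹ • (q i - τ ^ s • q j) := by
      rw [smul_sub, inv_smul_smul₀ hts]
    rw [h3, smul_inv₀, inv_inv, smul_mul_smul_comm, inv_mul_cancel₀ hts, one_smul]
  -- conjugation fixes E i
  have hEcomm : ∀ s : ℕ, E i ∘ₗ ((gi ^ s : F ≃ₐ[ℂ] F)).toLinearMap
      = ((gi ^ s : F ≃ₐ[ℂ] F)).toLinearMap ∘ₗ E i := by
    intro s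
    induction s with
    | zero => rfl
    | succ s ih =>
      have : ((gi ^ (s+1) : F ≃ₐ[ℂ] F)).toLinearMap
          = ((gi ^ s : F ≃ₐ[ℂ] F)).toLinearMap ∘ₗ gi.toLinearMap := by
        rw [pow_succ]; rfl
      rw [this, ← LinearMap.comp_assoc, ih, LinearMap.comp_assoc, ← hQE i i,
        ← LinearMap.comp_assoc]
  have hEconj : ∀ s : ℕ, ((gi⁻¹ ^ s : F ≃ₐ[ℂ] F)).toLinearMap ∘ₗ E i
      ∘ₗ ((gi ^ s : F ≃ₐ[ℂ] F)).toLinearMap = E i := by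
    intro s
    rw [hEcomm s, ← LinearMap.comp_assoc]
    have : ((gi⁻¹ ^ s : F ≃ₐ[ℂ] F)).toLinearMap ∘ₗ ((gi ^ s : F ≃ₐ[ℂ] F)).toLinearMap
        = LinearMap.id := by
      have h : (gi⁻¹ ^ s) * (gi ^ s) = (1 : F ≃ₐ[ℂ] F) := by
        rw [inv_pow, inv_mul_cancel]
      calc ((gi⁻¹ ^ s : F ≃ₐ[ℂ] F)).toLinearMap ∘ₗ ((gi ^ s : F ≃ₐ[ℂ] F)).toLinearMap
          = ((gi⁻¹ ^ s * gi ^ s : F ≃ₐ[ℂ] F)).toLinearMap := rfl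
        _ = LinearMap.id := by rw [h]; rfl
    rw [this, LinearMap.id_comp]
  -- conjugation of each Z i
  have key : ∀ s : ℕ,
      ((gi⁻¹ ^ s : F ≃ₐ[ℂ] F)).toLinearMap ∘ₗ Z i ∘ₗ ((gi ^ s : F ≃ₐ[ℂ] F)).toLinearMap
      = E i
        + ((m : ℂ) * lam) • ∑ j ∈ Finset.univ.erase i,
            (LinearMap.mulLeft ℂ (q i * (q i - τ ^ s • q j)⁻¹)) ∘ₗ
              ((gi⁻¹ ^ s * Pa i j * gi ^ s : F ≃ₐ[ℂ] F)).toLinearMap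
        - ((m : ℂ) * lam) • ∑ j ∈ Finset.univ.filter (fun j => i < j),
            ((gi⁻¹ ^ s * Pa i j * gi ^ s : F ≃ₐ[ℂ] F)).toLinearMap := by
    intro s
    show ((gi⁻¹ ^ s : F ≃ₐ[ℂ] F)).toLinearMap ∘ₗ
        (E i
          + ((m : ℂ) * lam) • ∑ j ∈ Finset.univ.erase i,
              (LinearMap.mulLeft ℂ (q i * (q i - q j)⁻¹)) ∘ₗ (Pa i j).toLinearMap
          - ((m : ℂ) * lam) • ∑ j ∈ Finset.univ.filter (fun j => i < j), (Pa i j).toLinearMap)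
        ∘ₗ ((gi ^ s : F ≃ₐ[ℂ] F)).toLinearMap = _
    rw [LinearMap.sub_comp, LinearMap.add_comp, LinearMap.comp_sub, LinearMap.comp_add,
      LinearMap.smul_comp, LinearMap.comp_smul, LinearMap.smul_comp, LinearMap.comp_smul,
      aux_sum_comp, aux_comp_sum, aux_sum_comp, aux_comp_sum,
      hEconj s]
    have hterm2 : ∀ j : Fin N,
        ((gi⁻¹ ^ s : F ≃ₐ[ℂ] F)).toLinearMap ∘ₗ (Pa i j).toLinearMap
          ∘ₗ ((gi ^ s : F ≃ₐ[ℂ] F)).toLinearMap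
        = ((gi⁻¹ ^ s * Pa i j * gi ^ s : F ≃ₐ[ℂ] F)).toLinearMap := fun j => rfl
    have hterm1 : ∀ j : Fin N, j ≠ i →
        ((gi⁻¹ ^ s : F ≃ₐ[ℂ] F)).toLinearMap
          ∘ₗ ((LinearMap.mulLeft ℂ (q i * (q i - q j)⁻¹)) ∘ₗ (Pa i j).toLinearMap)
          ∘ₗ ((gi ^ s : F ≃ₐ[ℂ] F)).toLinearMap
        = (LinearMap.mulLeft ℂ (q i * (q i - τ ^ s • q j)⁻¹)) ∘ₗ
            ((gi⁻¹ ^ s * Pa i j * gi ^ s : F ≃ₐ[ℂ] F)).toLinearMap := by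
      intro j hj
      ext x
      simp only [LinearMap.comp_apply, LinearMap.mulLeft_apply, AlgEquiv.toLinearMap_apply,
        AlgEquiv.mul_apply, map_mul]
      rw [← hcoef s j hj, map_mul]
    rw [Finset.sum_congr rfl (fun j hj => hterm1 j (Finset.ne_of_mem_erase hj)),
      Finset.sum_congr rfl (fun j _ => hterm2 j)]
  -- put it together
  rw [Finset.sum_congr rfl (fun s _ => key s)]
  have hc : (m : ℂ)⁻¹ * ((m : ℂ) * lam) = lam := by field_simp
  have hnsmul : (m : ℂ)⁻¹ • (m • E i) = E i := by
    rw [← Nat.cast_smul_eq_nsmul ℂ, smul_smul, inv_mul_cancel₀ hm0, one_smul]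
  rw [Finset.sum_sub_distrib, Finset.sum_add_distrib, Finset.sum_const, Finset.card_range,
    ← Finset.smul_sum, ← Finset.smul_sum, smul_sub, smul_add, smul_smul, smul_smul,
    hc, hnsmul]
  show E i
      + lam • ∑ j ∈ Finset.univ.erase i, ∑ s ∈ Finset.range m,
          (LinearMap.mulLeft ℂ (q i * (q i - τ ^ s • q j)⁻¹)) ∘ₗ
            ((gi⁻¹ ^ s * Pa i j * gi ^ s : F ≃ₐ[ℂ] F)).toLinearMap
      - lam • ∑ j ∈ Finset.univ.filter (fun j => i < j), ∑ s ∈ Finset.range m,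
          ((gi⁻¹ ^ s * Pa i j * gi ^ s : F ≃ₐ[ℂ] F)).toLinearMap = _
  rw [Finset.sum_comm]
  congr 2
  rw [Finset.sum_comm]
end
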